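/- Let R be a ring and A an R-module admitting an ordinal-indexed filtration (A_α)_{α≤λ} by submodules which is increasing, continuous at limit ordinals (A_β = ∪_{α<β} A_α for every limit ordinal β ≤ λ), with A_0 = 0, A_λ = A, and such that A_{α+1}/A_α is a countably generated projective R-module for every α with α+1 ≤ λ. Then for every ordinal γ ≤ λ the quotient A/A_γ is a projective R-module and A_γ is a direct summand of A. -/

import Mathlib

/-!
Since `A_{α+1}/A_α` is projective, each `A_α` has a complement `C_α` in `A_{α+1}`, and
`C_α ≅ A_{α+1}/A_α` is projective. By continuity `A_β = ⨆_{α<β} C_α`, and since every `C_β` meets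
`A_β = ⨆_{α<β} C_α` trivially, the family `(C_α)` is independent. Hence
`A = A_γ ⊕ ⨁_{γ≤α<λ} C_α`, and `A/A_γ ≅ ⨁_{γ≤α<λ} C_α` is a direct sum of projective modules.
-/

universe u v

open Order

section Lattice

variable {ι α : Type*} [CompleteLattice α]

theorem iSupIndep_of_disjoint_biSup_lt [LinearOrder ι] [IsModularLattice α]
    [IsCompactlyGenerated α] {t : ι → α} (h : ∀ j, Disjoint (⨆ i < j, t i) (t j)) :
    iSupIndep t := by
  classical
  refine iSupIndep_iff_supIndep.mpr fun s => ?_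
  induction s using Finset.induction_on_max with
  | empty => exact Finset.supIndep_empty t
  | insert j s hlt hs =>
    exact hs.insert <| (h j).symm.mono_right <| Finset.sup_le fun i hi => le_biSup t (hlt i hi)

theorem iSupIndep.isCompl_biSup_Iio_biSup_Ico [LinearOrder ι] [IsModularLattice α]
    [IsCompactlyGenerated α] {t : ι → α} (ht : iSupIndep t) {γ lam : ι}
    (htop : ⨆ i < lam, t i = ⊤) : IsCompl (⨆ i < γ, t i) (⨆ i ∈ Set.Ico γ lam, t i) := by
  refine ⟨ht.disjoint_biSup_biSup (s := Set.Iio γ)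
    ((Set.Iio_disjoint_Ici le_rfl).mono_right Set.Ico_subset_Ici_self), ?_⟩
  rw [codisjoint_iff, eq_top_iff, ← htop]
  refine iSup₂_le fun i hi => ?_
  rcases lt_or_ge i γ with hiγ | hγi
  · exact le_sup_of_le_left (le_biSup t hiγ)
  · exact le_sup_of_le_right (le_biSup t ⟨hγi, hi⟩)

theorem Ordinal.eq_biSup_lt_of_sup_eq_add_one {lam : Ordinal} {F C : Ordinal → α}
    (h0 : F 0 = ⊥) (hcont : ∀ β ≤ lam, IsSuccLimit β → F β = ⨆ α < β, F α)
    (hsucc : ∀ α < lam, F α ⊔ C α = F (α + 1)) :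
    ∀ β ≤ lam, F β = ⨆ α < β, C α := by
  intro β
  induction β using Ordinal.limitRecOn with
  | zero => simp [h0]
  | add_one β ih =>
    intro hβ
    have hlt : β < lam := add_one_le_iff.mp hβ
    rw [← hsucc β hlt, ih hlt.le]
    simp_rw [lt_add_one_iff, biSup_le_eq_sup]
  | limit β hlim ih =>
    intro hβ
    rw [hcont β hβ hlim]
    refine le_antisymm (iSup₂_le fun δ hδ => ?_) (iSup₂_le fun α hα => ?_)
    · rw [ih δ hδ (hδ.le.trans hβ)]
      exact biSup_mono fun α hα => hα.trans hδ
    · calc C α ≤ F (α + 1) := le_sup_right.trans (hsucc α (hα.trans_le hβ)).le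
        _ ≤ ⨆ α < β, F α := le_biSup F (hlim.add_one_lt hα)

end Lattice

section Module

variable {R : Type u} [Ring R] {M : Type v} [AddCommGroup M] [Module R M]

theorem Submodule.exists_isCompl_of_projective_quotient (K : Submodule R M)
    [Module.Projective R (M ⧸ K)] : ∃ C : Submodule R M, IsCompl K C := by
  obtain ⟨g, hg⟩ := K.mkQ.exists_rightInverse_of_surjective K.range_mkQ
  have hidem : IsIdempotentElem (g ∘ₗ K.mkQ) := by
    ext x
    simpa using congrArg g (LinearMap.congr_fun hg (K.mkQ x))
  have hker : LinearMap.ker (g ∘ₗ K.mkQ) = K := by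
    rw [LinearMap.ker_comp, LinearMap.ker_eq_bot_of_inverse hg, Submodule.comap_bot, K.ker_mkQ]
  exact ⟨_, hker ▸ (LinearMap.IsIdempotentElem.isCompl hidem).symm⟩

theorem Submodule.exists_disjoint_sup_eq_of_projective_quotient {N P : Submodule R M}
    (hNP : N ≤ P) [Module.Projective R (P ⧸ N.comap P.subtype)] :
    ∃ C : Submodule R M, Disjoint N C ∧ N ⊔ C = P ∧ Module.Projective R C := by
  obtain ⟨C, hC⟩ := (N.comap P.subtype).exists_isCompl_of_projective_quotient
  have hN : (N.comap P.subtype).map P.subtype = N := by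
    rw [Submodule.map_comap_subtype, inf_eq_right.mpr hNP]
  refine ⟨C.map P.subtype, ?_, ?_, ?_⟩
  · rw [← hN]
    exact Submodule.disjoint_map P.injective_subtype hC.disjoint
  · rw [← hN, ← Submodule.map_sup, hC.sup_eq_top, Submodule.map_top, Submodule.range_subtype]
  · exact .of_equiv ((Submodule.quotientEquivOfIsCompl _ C hC).trans (P.equivSubtypeMap C))

theorem iSupIndep.projective_iSup {ι : Type*} {p : ι → Submodule R M} (hp : iSupIndep p)
    [∀ i, Module.Projective R (p i)] : Module.Projective R ↥(⨆ i, p i) := by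
  classical
  exact .of_equiv <| (LinearEquiv.ofInjective _ hp.dfinsupp_lsum_injective).trans
    (LinearEquiv.ofEq _ _ (Submodule.iSup_eq_range_dfinsupp_lsum p).symm)

/-- The complements are taken to be `⊥` from `lam` on, so that the whole family is independent. -/
theorem Ordinal.exists_projective_complements {lam : Ordinal} {F : Ordinal → Submodule R M}
    (hle : ∀ α < lam, F α ≤ F (α + 1))
    (hproj : ∀ α < lam,
      Module.Projective R (↥(F (α + 1)) ⧸ Submodule.comap (F (α + 1)).subtype (F α))) :
    ∃ C : Ordinal → Submodule R M,
      (∀ α < lam, Disjoint (F α) (C α) ∧ F α ⊔ C α = F (α + 1) ∧ Module.Projective R (C α)) ∧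
      ∀ α, lam ≤ α → C α = ⊥ := by
  have hstep (α : Ordinal) : ∃ C : Submodule R M,
      (α < lam → Disjoint (F α) C ∧ F α ⊔ C = F (α + 1) ∧ Module.Projective R C) ∧
      (lam ≤ α → C = ⊥) := by
    rcases lt_or_ge α lam with hα | hα
    · have := hproj α hα
      obtain ⟨C, hC⟩ := Submodule.exists_disjoint_sup_eq_of_projective_quotient (hle α hα)
      exact ⟨C, fun _ => hC, fun h => absurd hα h.not_gt⟩
    · exact ⟨⊥, fun h => absurd hα h.not_ge, fun _ => rfl⟩
  choose C hC hCbot using hstep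
  exact ⟨C, hC, hCbot⟩

end Module

theorem stmt13_general {R : Type u} [Ring R] {A : Type v} [AddCommGroup A] [Module R A]
    (lam : Ordinal) (F : Ordinal → Submodule R A)
    (hmono : ∀ α β, α ≤ β → β ≤ lam → F α ≤ F β)
    (h0 : F 0 = ⊥) (htop : F lam = ⊤)
    (hcont : ∀ β ≤ lam, Order.IsSuccLimit β → F β = ⨆ α < β, F α)
    (hproj : ∀ α, α + 1 ≤ lam →
      Module.Projective R (↥(F (α + 1)) ⧸ Submodule.comap (F (α + 1)).subtype (F α))) :
    ∀ γ ≤ lam, Module.Projective R (A ⧸ F γ) ∧ ∃ B : Submodule R A, IsCompl (F γ) B := by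
  obtain ⟨C, hC, hCbot⟩ := Ordinal.exists_projective_complements
    (fun α hα => hmono α (α + 1) le_self_add (add_one_le_iff.mpr hα))
    (fun α hα => hproj α (add_one_le_iff.mpr hα))
  have hF : ∀ β ≤ lam, F β = ⨆ α < β, C α :=
    Ordinal.eq_biSup_lt_of_sup_eq_add_one h0 hcont fun α hα => (hC α hα).2.1
  have hind : iSupIndep C := iSupIndep_of_disjoint_biSup_lt fun β => by
    rcases lt_or_ge β lam with hβ | hβ
    · exact hF β hβ.le ▸ (hC β hβ).1
    · simp [hCbot β hβ]
  intro γ hγ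
  have hcompl : IsCompl (F γ) (⨆ α ∈ Set.Ico γ lam, C α) :=
    hF γ hγ ▸ hind.isCompl_biSup_Iio_biSup_Ico (hF lam le_rfl ▸ htop)
  have (i : Set.Ico γ lam) : Module.Projective R ((C ∘ Subtype.val) i) := (hC i i.2.2).2.2
  have hB : Module.Projective R ↥(⨆ i : Set.Ico γ lam, C i) :=
    (hind.comp Subtype.val_injective).projective_iSup
  rw [iSup_subtype''] at hB
  exact ⟨.of_equiv (Submodule.quotientEquivOfIsCompl _ _ hcompl).symm, _, hcompl⟩

/-- if an `R`-module `A` is a direct transfinite extension of countably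
generated projective modules, then for every ordinal `γ ≤ λ` the quotient `A / A_γ` is
projective and `A_γ` is a direct summand of `A`. -/
theorem stmt13 {R : Type u} [Ring R] {A : Type v} [AddCommGroup A] [Module R A]
    (lam : Ordinal) (F : Ordinal → Submodule R A)
    (hmono : ∀ α β, α ≤ β → β ≤ lam → F α ≤ F β)
    (h0 : F 0 = ⊥) (htop : F lam = ⊤)
    (hcont : ∀ β ≤ lam, Order.IsSuccLimit β → F β = ⨆ α < β, F α)
    (hproj : ∀ α, α + 1 ≤ lam →
      Module.Projective R (↥(F (α + 1)) ⧸ Submodule.comap (F (α + 1)).subtype (F α)))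
    (hcg : ∀ α, α + 1 ≤ lam →
      ∃ s : Set (↥(F (α + 1)) ⧸ Submodule.comap (F (α + 1)).subtype (F α)),
        s.Countable ∧ Submodule.span R s = ⊤) :
    ∀ γ ≤ lam, Module.Projective R (A ⧸ F γ) ∧ ∃ B : Submodule R A, IsCompl (F γ) B :=
  stmt13_general lam F hmono h0 htop hcont hproj
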